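/- Let (X,G) be a Cantor dynamical system whose full group [G] has many involutions, and let V be a regular open subset of X. Then the centralizer in [G] of Γ_V = {γ ∈ [G] : spr(γ) ⊆ V} equals Γ_{V⊥} = {γ ∈ [G] : spr(γ) ⊆ X \ closure(V)}. -/

import Mathlib

open Set

variable {X : Type*} [TopologicalSpace X]

noncomputable instance Homeomorph.instGroup' : Group (X ≃ₜ X) where
  mul f g := g.trans f
  one := Homeomorph.refl X
  inv := Homeomorph.symm
  mul_assoc _ _ _ := Homeomorph.ext fun _ => rfl
  one_mul _ := Homeomorph.ext fun _ => rfl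
  mul_one _ := Homeomorph.ext fun _ => rfl
  inv_mul_cancel f := Homeomorph.ext fun x => f.symm_apply_apply x

@[simp] theorem Homeomorph.mul_apply' (f g : X ≃ₜ X) (x : X) : (f * g) x = f (g x) := rfl
@[simp] theorem Homeomorph.one_apply' (x : X) : (1 : X ≃ₜ X) x = x := rfl

/-- The support of a homeomorphism. -/
def spr (γ : X ≃ₜ X) : Set X := interior (closure {x | γ x ≠ x})

/-- The orbit of a point under a subgroup of homeomorphisms. -/
def orbitOf (G : Subgroup (X ≃ₜ X)) (x : X) : Set X := {y | ∃ g ∈ G, (g : X ≃ₜ X) x = y}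

/-- The full group of a Cantor dynamical system. -/
def fullGroup (G : Subgroup (X ≃ₜ X)) : Subgroup (X ≃ₜ X) where
  carrier := {γ | ∀ x, γ x ∈ orbitOf G x}
  one_mem' x := ⟨1, G.one_mem, rfl⟩
  mul_mem' {a b} ha hb x := by
    obtain ⟨h, hh, hbx⟩ := hb x
    obtain ⟨g, hg, hax⟩ := ha (b x)
    exact ⟨g * h, G.mul_mem hg hh, by simp only [Homeomorph.mul_apply'] at *; rw [hbx, hax]⟩
  inv_mem' {a} ha := by
    intro x
    obtain ⟨g, hg, hax⟩ := ha (a⁻¹ x)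
    refine ⟨g⁻¹, G.inv_mem hg, ?_⟩
    have : a (a⁻¹ x) = x := a.apply_symm_apply x
    rw [this] at hax
    have : (g⁻¹ : X ≃ₜ X) (g (a⁻¹ x)) = a⁻¹ x := g.symm_apply_apply _
    rw [hax] at this
    exact this

/-!
If `ρ` moves a point `x ∈ V`, choose a clopen neighbourhood `W ⊆ V` of `x` with `ρ W ∩ W = ∅`.
A nontrivial involution `π` supported in `W` moves some `y ∈ W` but fixes `ρ y ∉ W`, so
`ρ (π y) ≠ ρ y = π (ρ y)`: `ρ` does not commute with `π ∈ Γ_V`. Hence everything commuting with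
`Γ_V` fixes `V` pointwise, i.e. is supported in `V⊥`; conversely, elements of `Γ_V` and `Γ_{V⊥}`
move disjoint sets of points, so they commute.
-/

section Support

variable {X : Type*} [TopologicalSpace X]

def HasManyInvolutions (G : Subgroup (X ≃ₜ X)) : Prop :=
  ∀ A : Set X, A = interior (closure A) → A.Nonempty →
    ∃ π ∈ fullGroup G, π * π = 1 ∧ π ≠ 1 ∧ spr π ⊆ A

lemma IsClopen.interior_closure_eq {W : Set X} (hW : IsClopen W) : interior (closure W) = W := by
  rw [hW.isClosed.closure_eq, hW.isOpen.interior_eq]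

lemma Homeomorph.apply_apply_ne {f : X ≃ₜ X} {x : X} (hx : f x ≠ x) : f (f x) ≠ f x :=
  fun h => hx (f.injective h)

lemma Homeomorph.mul_comm_of_disjoint_moved {f g : X ≃ₜ X}
    (h : Disjoint {x | f x ≠ x} {x | g x ≠ x}) : f * g = g * f := by
  have hg : ∀ x, f x ≠ x → g x = x := fun x hx => not_not.mp (Set.disjoint_left.mp h hx)
  have hf : ∀ x, g x ≠ x → f x = x := fun x hx => not_not.mp (Set.disjoint_right.mp h hx)
  ext x
  change f (g x) = g (f x)
  by_cases hfx : f x = x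
  · by_cases hgx : g x = x
    · rw [hfx, hgx, hfx]
    · rw [hfx, hf _ (Homeomorph.apply_apply_ne hgx)]
  · rw [hg x hfx, hg _ (Homeomorph.apply_apply_ne hfx)]

lemma spr_subset_compl_closure_of_eqOn {ρ : X ≃ₜ X} {V : Set X} (hV : IsOpen V)
    (hρ : ∀ x ∈ V, ρ x = x) : spr ρ ⊆ (closure V)ᶜ := by
  have hmoved : closure {x | ρ x ≠ x} ⊆ Vᶜ :=
    closure_minimal (fun x hx hxV => hx (hρ x hxV)) hV.isClosed_compl
  simpa only [spr, interior_compl] using interior_mono hmoved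

variable [T2Space X]

lemma moved_subset_spr (γ : X ≃ₜ X) : {x | γ x ≠ x} ⊆ spr γ :=
  interior_maximal subset_closure (isOpen_ne_fun γ.continuous continuous_id)

lemma apply_eq_of_notMem_spr {γ : X ≃ₜ X} {x : X} (hx : x ∉ spr γ) : γ x = x :=
  not_not.mp fun h => hx (moved_subset_spr γ h)

lemma mul_comm_of_spr_subset {ρ γ : X ≃ₜ X} {V : Set X} (hρ : spr ρ ⊆ (closure V)ᶜ)
    (hγ : spr γ ⊆ V) : ρ * γ = γ * ρ :=
  Homeomorph.mul_comm_of_disjoint_moved <| Set.disjoint_left.mpr fun _ hρx hγx =>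
    hρ (moved_subset_spr ρ hρx) (subset_closure (hγ (moved_subset_spr γ hγx)))

lemma mul_ne_mul_of_spr_subset {ρ π : X ≃ₜ X} {W : Set X} (hπ : π ≠ 1) (hπW : spr π ⊆ W)
    (hρW : Set.MapsTo ρ W Wᶜ) : ρ * π ≠ π * ρ := by
  obtain ⟨y, hy⟩ : ∃ y, π y ≠ y := not_forall.mp fun h => hπ (Homeomorph.ext h)
  have hπρy : π (ρ y) = ρ y :=
    apply_eq_of_notMem_spr fun h => hρW (hπW (moved_subset_spr π hy)) (hπW h)
  intro hcomm
  have : ρ (π y) = π (ρ y) := Homeomorph.ext_iff.mp hcomm y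
  exact hy (ρ.injective (this.trans hπρy))

lemma exists_isClopen_mapsTo_compl [CompactSpace X] [TotallyDisconnectedSpace X] {ρ : X ≃ₜ X}
    {x : X} {N : Set X} (hN : IsOpen N) (hxN : x ∈ N) (hx : ρ x ≠ x) :
    ∃ W, IsClopen W ∧ x ∈ W ∧ W ⊆ N ∧ Set.MapsTo ρ W Wᶜ := by
  obtain ⟨U₁, U₂, hU₁, hU₂, hxU₁, hρxU₂, hU₁₂⟩ := t2_separation (Ne.symm hx)
  obtain ⟨W, hW, hxW, hWsub⟩ := compact_exists_isClopen_in_isOpen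
    ((hN.inter hU₁).inter (hU₂.preimage ρ.continuous)) ⟨⟨hxN, hxU₁⟩, hρxU₂⟩
  refine ⟨W, hW, hxW, fun y hy => (hWsub hy).1.1, fun y hy hρy => ?_⟩
  exact Set.disjoint_left.mp hU₁₂ (hWsub hρy).1.2 (hWsub hy).2

lemma apply_eq_of_forall_mul_comm [CompactSpace X] [TotallyDisconnectedSpace X]
    {G : Subgroup (X ≃ₜ X)} (hmi : HasManyInvolutions G) {V : Set X} (hV : IsOpen V)
    {ρ : X ≃ₜ X} (hρ : ∀ γ ∈ fullGroup G, spr γ ⊆ V → ρ * γ = γ * ρ) : ∀ x ∈ V, ρ x = x := by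
  intro x hxV
  by_contra hx
  obtain ⟨W, hW, hxW, hWV, hρW⟩ := exists_isClopen_mapsTo_compl hV hxV hx
  obtain ⟨π, hπG, -, hπ, hπW⟩ := hmi W hW.interior_closure_eq.symm ⟨x, hxW⟩
  exact mul_ne_mul_of_spr_subset hπ hπW hρW (hρ π hπG (hπW.trans hWV))

end Support

theorem centralizer_gammaV_general {X : Type*} [TopologicalSpace X] [CompactSpace X] [TopologicalSpace.MetrizableSpace X] [TotallyDisconnectedSpace X]
    (G : Subgroup (X ≃ₜ X)) (hmi : ∀ A : Set X, A = interior (closure A) → A.Nonempty → ∃ π ∈ fullGroup G, π * π = 1 ∧ π ≠ 1 ∧ spr π ⊆ A)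
    (V : Set X) (hV : V = interior (closure V)) :
    {ρ : X ≃ₜ X | ρ ∈ fullGroup G ∧ ∀ γ ∈ fullGroup G, spr γ ⊆ V → ρ * γ = γ * ρ}
      = {γ : X ≃ₜ X | γ ∈ fullGroup G ∧ spr γ ⊆ (closure V)ᶜ} := by
  have hVopen : IsOpen V := hV ▸ isOpen_interior
  ext ρ
  refine and_congr_right fun _ => ⟨fun hρ => ?_, fun hρ γ _ hγ => mul_comm_of_spr_subset hρ hγ⟩
  exact spr_subset_compl_closure_of_eqOn hVopen (apply_eq_of_forall_mul_comm hmi hVopen hρ)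

/-- The centralizer of `Γ_V` in the full group is `Γ_(V⊥)`. -/
theorem centralizer_gammaV {X : Type*} [TopologicalSpace X] [CompactSpace X] [TopologicalSpace.MetrizableSpace X] [TotallyDisconnectedSpace X] [PerfectSpace X] [Nonempty X]
    (G : Subgroup (X ≃ₜ X)) (hmi : ∀ A : Set X, A = interior (closure A) → A.Nonempty → ∃ π ∈ fullGroup G, π * π = 1 ∧ π ≠ 1 ∧ spr π ⊆ A)
    (V : Set X) (hV : V = interior (closure V)) :
    {ρ : X ≃ₜ X | ρ ∈ fullGroup G ∧ ∀ γ ∈ fullGroup G, spr γ ⊆ V → ρ * γ = γ * ρ}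
      = {γ : X ≃ₜ X | γ ∈ fullGroup G ∧ spr γ ⊆ (closure V)ᶜ} :=
  centralizer_gammaV_general G hmi V hV
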